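/- There is no compact strictly elliptic conformally constrained minimal torus in ℝ³ in the following sense: there do not exist a lattice Λ = ℤv₁ ⊕ ℤv₂ ⊂ ℝ², a smooth Λ-periodic conformal immersion Φ : ℝ² → ℝ³ with conformal factor e^λ, and constants Q₁, Q₂ ∈ ℝ such that at every point of ℝ² one has H = 4 e^{−4λ}(Q₁ I⁰₁₁ − Q₂ I⁰₁₂) and 4 e^{−2λ} √(Q₁² + Q₂²) < 1. -/

import Mathlib

/-!
Let `x₀` be a point where `‖Φ‖²` is maximal; it exists because `Φ` is doubly periodic. There
`Φ x₀` is orthogonal to `∂₁Φ` and `∂₂Φ`, hence equal to `κ n` for the unit normal `n`, and the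
Hessian of `‖Φ‖²` is nonpositive: `e^{2λ}|ξ|² + κ II(ξ, ξ) ≤ 0` for all `ξ`. So `κ II` is
negative definite and `I₁₁I₂₂ - I₁₂² > 0`. On the other hand the constrained minimal equation reads
`I₁₁ + I₂₂ = 8 e^{-2λ}(Q₁I⁰₁₁ - Q₂I⁰₁₂)`; by Cauchy–Schwarz and strict ellipticity
`(I₁₁ + I₂₂)² ≤ 4((I⁰₁₁)² + (I⁰₁₂)²) = (I₁₁ - I₂₂)² + 4I₁₂²`, that is `I₁₁I₂₂ - I₁₂² ≤ 0`.
-/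

noncomputable section

open Real MeasureTheory
open scoped ENNReal RealInnerProductSpace

/-- The plane `ℝ²`. -/
abbrev RR2 := ℝ × ℝ
/-- Euclidean `ℝ³`. -/
abbrev RR3 := EuclideanSpace ℝ (Fin 3)

/-- Partial derivative in the `x₁` direction of an `ℝ³`-valued map on `ℝ²`. -/
def d1 (f : RR2 → RR3) (x : RR2) : RR3 := fderiv ℝ f x (1, 0)
/-- Partial derivative in the `x₂` direction of an `ℝ³`-valued map on `ℝ²`. -/
def d2 (f : RR2 → RR3) (x : RR2) : RR3 := fderiv ℝ f x (0, 1)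

/-- Cross product of two vectors of `ℝ³`. -/
def cross3 (a b : RR3) : RR3 := WithLp.toLp 2 (fun i => (crossProduct (fun j => a j) (fun j => b j)) i)

/-- The Gauss map `n = e^{-2λ} ∂_{x₁}Φ × ∂_{x₂}Φ` of a conformal immersion into `ℝ³`. -/
def gauss (Φ : RR2 → RR3) (lam : RR2 → ℝ) (x : RR2) : RR3 :=
  exp (-(2 * lam x)) • cross3 (d1 Φ x) (d2 Φ x)

/-- Second fundamental form coefficient `I₁₁`. -/
def I11 (Φ : RR2 → RR3) (lam : RR2 → ℝ) (x : RR2) : ℝ := ⟪gauss Φ lam x, d1 (d1 Φ) x⟫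
/-- Second fundamental form coefficient `I₁₂`. -/
def I12 (Φ : RR2 → RR3) (lam : RR2 → ℝ) (x : RR2) : ℝ := ⟪gauss Φ lam x, d2 (d1 Φ) x⟫
/-- Second fundamental form coefficient `I₂₂`. -/
def I22 (Φ : RR2 → RR3) (lam : RR2 → ℝ) (x : RR2) : ℝ := ⟪gauss Φ lam x, d2 (d2 Φ) x⟫

/-- Mean curvature `H = (1/2) e^{-2λ}(I₁₁ + I₂₂)`. -/
def meanCurv (Φ : RR2 → RR3) (lam : RR2 → ℝ) (x : RR2) : ℝ :=
  (1 / 2) * exp (-(2 * lam x)) * (I11 Φ lam x + I22 Φ lam x)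

/-- Trace-free Weingarten coefficient `I⁰₁₁ = (I₁₁ - I₂₂)/2`. -/
def I011 (Φ : RR2 → RR3) (lam : RR2 → ℝ) (x : RR2) : ℝ := (I11 Φ lam x - I22 Φ lam x) / 2
/-- Trace-free Weingarten coefficient `I⁰₁₂ = I₁₂`. -/
def I012 (Φ : RR2 → RR3) (lam : RR2 → ℝ) (x : RR2) : ℝ := I12 Φ lam x

open Topology
open scoped Matrix

section

variable {E F : Type*} [NormedAddCommGroup E] [NormedSpace ℝ E] [NormedAddCommGroup F]

theorem Continuous.exists_forall_le_of_zspan_periodic [FiniteDimensional ℝ E] {ι : Type*}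
    [Finite ι] (b : Module.Basis ι ℝ E) {f : E → ℝ} (hf : Continuous f)
    (hper : ∀ z w, w ∈ Submodule.span ℤ (Set.range b) → f (z + w) = f z) :
    ∃ x₀, ∀ x, f x ≤ f x₀ := by
  obtain ⟨_, ⟨x₀, rfl⟩, hx₀⟩ :=
    (IsZLattice.isCompact_range_of_periodic _ f hf hper).exists_isGreatest (Set.range_nonempty f)
  exact ⟨x₀, fun x => hx₀ ⟨x, rfl⟩⟩

theorem Continuous.exists_forall_le_of_periodic₂
    (hE : Module.finrank ℝ E = 2) {v₁ v₂ : E} (hv : LinearIndependent ℝ ![v₁, v₂]) {f : E → ℝ}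
    (hf : Continuous f) (hper : ∀ (x : E) (m k : ℤ), f (x + m • v₁ + k • v₂) = f x) :
    ∃ x₀, ∀ x, f x ≤ f x₀ := by
  have : FiniteDimensional ℝ E := Module.finite_of_finrank_eq_succ hE
  let b := basisOfLinearIndependentOfCardEqFinrank hv (by simp [hE])
  refine hf.exists_forall_le_of_zspan_periodic b fun z w hw => ?_
  rw [coe_basisOfLinearIndependentOfCardEqFinrank, Matrix.range_cons_cons_empty,
    Submodule.mem_span_pair] at hw
  obtain ⟨m, k, rfl⟩ := hw
  rw [← add_assoc, hper]

/-- If `f''(a) > 0`, the second derivative test makes `a` also a local minimum, so `f` is locally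
constant near `a` and `f''(a) = 0` after all. -/
theorem IsLocalMax.deriv_deriv_nonpos {f : ℝ → ℝ} {a : ℝ} (h : IsLocalMax f a)
    (hc : ContinuousAt f a) : deriv (deriv f) a ≤ 0 := by
  by_contra! hpos
  have hconst : f =ᶠ[𝓝 a] fun _ => f a :=
    (h.and (isLocalMin_of_deriv_deriv_pos hpos h.deriv_eq_zero hc)).mono
      fun x hx => le_antisymm hx.1 hx.2
  have : deriv (deriv f) a = 0 := by
    rw [hconst.deriv.deriv_eq, deriv_const']
    simp
  exact hpos.ne' this

theorem fderiv_fderiv_apply [NormedSpace ℝ F] {f : E → F} {x : E}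
    (h : DifferentiableAt ℝ (fderiv ℝ f) x) (v w : E) :
    fderiv ℝ (fun y => fderiv ℝ f y v) x w = fderiv ℝ (fderiv ℝ f) x w v := by
  rw [fderiv_clm_apply h (differentiableAt_const v)]
  simp

variable [InnerProductSpace ℝ F] {Φ : E → F} {x₀ : E}

theorem IsLocalMax.inner_fderiv_eq_zero (h : IsLocalMax (‖Φ ·‖ ^ 2) x₀)
    (hΦ : DifferentiableAt ℝ Φ x₀) (e : E) : ⟪Φ x₀, fderiv ℝ Φ x₀ e⟫ = 0 := by
  simpa using congr($(h.hasFDerivAt_eq_zero hΦ.hasFDerivAt.norm_sq) e)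

theorem IsLocalMax.norm_fderiv_sq_add_inner_fderiv_fderiv_nonpos
    (h : IsLocalMax (‖Φ ·‖ ^ 2) x₀) (hΦ : ContDiff ℝ 2 Φ) (e : E) :
    ‖fderiv ℝ Φ x₀ e‖ ^ 2 + ⟪Φ x₀, fderiv ℝ (fderiv ℝ Φ) x₀ e e⟫ ≤ 0 := by
  set γ : ℝ → E := fun τ => x₀ + τ • e
  have hγ0 : γ 0 = x₀ := by simp [γ]
  have hγ (τ : ℝ) : HasDerivAt γ e τ :=
    (((hasDerivAt_id τ).smul_const e).const_add x₀).congr_deriv (one_smul ℝ e)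
  have hΦγ (τ : ℝ) : HasDerivAt (fun τ => Φ (γ τ)) (fderiv ℝ Φ (γ τ) e) τ :=
    ((hΦ.differentiable (by norm_num)) _).hasFDerivAt.comp_hasDerivAt τ (hγ τ)
  have hDΦ : HasFDerivAt (fderiv ℝ Φ) (fderiv ℝ (fderiv ℝ Φ) x₀) x₀ :=
    ((hΦ.fderiv_right (m := 1) (by norm_num)).differentiable (by norm_num) x₀).hasFDerivAt
  have hDΦγ : HasDerivAt (fun τ => fderiv ℝ Φ (γ τ) e) (fderiv ℝ (fderiv ℝ Φ) x₀ e e) 0 :=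
    ((hDΦ.clm_apply (hasFDerivAt_const e x₀)).comp_hasDerivAt_of_eq 0 (hγ 0)
      hγ0.symm).congr_deriv (by simp)
  have hderiv : deriv (fun τ => ‖Φ (γ τ)‖ ^ 2) = fun τ => 2 * ⟪Φ (γ τ), fderiv ℝ Φ (γ τ) e⟫ :=
    funext fun τ => (hΦγ τ).norm_sq.deriv
  have hmax : IsLocalMax (fun τ => ‖Φ (γ τ)‖ ^ 2) 0 :=
    (hγ0 ▸ h).comp_continuous (hγ 0).continuousAt
  have hsecond := hmax.deriv_deriv_nonpos (hΦγ 0).norm_sq.continuousAt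
  rw [hderiv, (((hΦγ 0).inner ℝ hDΦγ).const_mul 2).deriv, hγ0,
    real_inner_self_eq_norm_sq] at hsecond
  linarith

end

theorem sq_lt_mul_of_quadratic_le_neg {a b c E : ℝ} (hE : 0 < E)
    (h : ∀ s t : ℝ, a * s ^ 2 + 2 * b * s * t + c * t ^ 2 ≤ -(E * (s ^ 2 + t ^ 2))) :
    b ^ 2 < a * c := by
  have ha : a + E ≤ 0 := by linarith [h 1 0]
  have hc : c + E ≤ 0 := by linarith [h 0 1]
  have hdisc : discrim (-(a + E)) (-(2 * b)) (-(c + E)) ≤ 0 :=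
    discrim_le_zero fun s => by nlinarith [h s 1]
  rw [discrim] at hdisc
  nlinarith [mul_nonneg (neg_nonneg.2 ha) hE.le, mul_nonneg (neg_nonneg.2 hc) hE.le]

theorem mul_le_sq_of_add_eq {a b c r Q₁ Q₂ : ℝ} (hr : 0 ≤ r)
    (hell : 4 * r * √(Q₁ ^ 2 + Q₂ ^ 2) < 1)
    (h : a + c = 8 * r * (Q₁ * ((a - c) / 2) - Q₂ * b)) : a * c ≤ b ^ 2 := by
  set q := √(Q₁ ^ 2 + Q₂ ^ 2)
  have hq : q ^ 2 = Q₁ ^ 2 + Q₂ ^ 2 := sq_sqrt (by positivity)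
  have hrq : (4 * r * q) ^ 2 ≤ 1 := pow_le_one₀ (by positivity) hell.le
  have hCS : (Q₁ * ((a - c) / 2) - Q₂ * b) ^ 2 ≤ q ^ 2 * (((a - c) / 2) ^ 2 + b ^ 2) := by
    rw [hq]
    nlinarith [sq_nonneg (Q₁ * b + Q₂ * ((a - c) / 2))]
  have : (a + c) ^ 2 ≤ (a - c) ^ 2 + 4 * b ^ 2 := calc
    (a + c) ^ 2 = 64 * r ^ 2 * (Q₁ * ((a - c) / 2) - Q₂ * b) ^ 2 := by rw [h]; ring
    _ ≤ 64 * r ^ 2 * (q ^ 2 * (((a - c) / 2) ^ 2 + b ^ 2)) := by gcongr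
    _ = 4 * (4 * r * q) ^ 2 * (((a - c) / 2) ^ 2 + b ^ 2) := by ring
    _ ≤ 4 * 1 * (((a - c) / 2) ^ 2 + b ^ 2) := by gcongr
    _ = (a - c) ^ 2 + 4 * b ^ 2 := by ring
  linarith

theorem inner_eq_dotProduct (x y : RR3) : ⟪x, y⟫ = WithLp.ofLp x ⬝ᵥ WithLp.ofLp y := by
  rw [EuclideanSpace.inner_eq_star_dotProduct, star_trivial, dotProduct_comm]

theorem ofLp_cross3 (a b : RR3) : WithLp.ofLp (cross3 a b) = WithLp.ofLp a ⨯₃ WithLp.ofLp b :=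
  rfl

theorem inner_cross3_self (u v : RR3) :
    ⟪cross3 u v, cross3 u v⟫ = ‖u‖ ^ 2 * ‖v‖ ^ 2 - ⟪u, v⟫ ^ 2 := by
  simp only [← real_inner_self_eq_norm_sq, inner_eq_dotProduct, ofLp_cross3, cross_dot_cross]
  rw [dotProduct_comm (WithLp.ofLp v) (WithLp.ofLp u)]
  ring

/-- `|N|² p - ⟪p, N⟫ N = N × (p × N)`, and `p × (u × v) = 0` when `p ⟂ u, v`. -/
theorem inner_cross3_smul_eq {u v p : RR3} (hu : ⟪p, u⟫ = 0) (hv : ⟪p, v⟫ = 0) :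
    ⟪cross3 u v, cross3 u v⟫ • p = ⟪p, cross3 u v⟫ • cross3 u v := by
  rw [inner_eq_dotProduct] at hu hv
  apply WithLp.ofLp_injective
  have hp : WithLp.ofLp p ⨯₃ WithLp.ofLp (cross3 u v) = 0 := by
    rw [ofLp_cross3, cross_cross_eq_smul_sub_smul', dotProduct_comm _ (WithLp.ofLp p), hu, hv]
    simp
  have := cross_cross_eq_smul_sub_smul' (WithLp.ofLp (cross3 u v)) (WithLp.ofLp p)
    (WithLp.ofLp (cross3 u v))
  rw [hp, map_zero] at this
  simp only [WithLp.ofLp_smul, inner_eq_dotProduct]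
  exact (sub_eq_zero.1 this.symm)

theorem fderiv_apply_prod (f : RR2 → RR3) (x : RR2) (s t : ℝ) :
    fderiv ℝ f x (s, t) = s • d1 f x + t • d2 f x := by
  rw [d1, d2, ← map_smul, ← map_smul, ← map_add]
  simp

theorem fderiv_fderiv_apply_prod {Φ : RR2 → RR3} {x : RR2} (hΦ : ContDiffAt ℝ 2 Φ x) (s t : ℝ) :
    fderiv ℝ (fderiv ℝ Φ) x (s, t) (s, t)
      = s ^ 2 • d1 (d1 Φ) x + (2 * s * t) • d2 (d1 Φ) x + t ^ 2 • d2 (d2 Φ) x := by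
  have hD : DifferentiableAt ℝ (fderiv ℝ Φ) x :=
    (hΦ.fderiv_right (m := 1) (by norm_num)).differentiableAt (by norm_num)
  have h₁₁ : d1 (d1 Φ) x = fderiv ℝ (fderiv ℝ Φ) x (1, 0) (1, 0) := fderiv_fderiv_apply hD _ _
  have h₁₂ : d2 (d1 Φ) x = fderiv ℝ (fderiv ℝ Φ) x (0, 1) (1, 0) := fderiv_fderiv_apply hD _ _
  have h₂₂ : d2 (d2 Φ) x = fderiv ℝ (fderiv ℝ Φ) x (0, 1) (0, 1) := fderiv_fderiv_apply hD _ _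
  have hst : ((s, t) : RR2) = s • (1, 0) + t • (0, 1) := by simp
  rw [h₁₁, h₁₂, h₂₂, hst]
  simp only [map_add, map_smul, add_apply, smul_apply,
    (hΦ.isSymmSndFDerivAt (by simp)).eq (1, 0) (0, 1)]
  module

section Conformal

variable {Φ : RR2 → RR3} {lam : RR2 → ℝ} {x : RR2}

theorem inner_gauss_self (horth : ⟪d1 Φ x, d2 Φ x⟫ = 0) (h₁ : ‖d1 Φ x‖ = exp (lam x))
    (h₂ : ‖d2 Φ x‖ = exp (lam x)) : ⟪gauss Φ lam x, gauss Φ lam x⟫ = 1 := by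
  rw [gauss, real_inner_smul_left, real_inner_smul_right, inner_cross3_self, h₁, h₂, horth,
    ← exp_nat_mul, zero_pow two_ne_zero, sub_zero, ← exp_add, ← exp_add, ← exp_add, ← exp_zero]
  congr 1
  push_cast
  ring

theorem eq_inner_gauss_smul_gauss (horth : ⟪d1 Φ x, d2 Φ x⟫ = 0)
    (h₁ : ‖d1 Φ x‖ = exp (lam x)) (h₂ : ‖d2 Φ x‖ = exp (lam x)) {p : RR3}
    (hp₁ : ⟪p, d1 Φ x⟫ = 0) (hp₂ : ⟪p, d2 Φ x⟫ = 0) :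
    p = ⟪p, gauss Φ lam x⟫ • gauss Φ lam x := by
  set r := exp (-(2 * lam x))
  set N := cross3 (d1 Φ x) (d2 Φ x)
  calc p = ⟪gauss Φ lam x, gauss Φ lam x⟫ • p := by rw [inner_gauss_self horth h₁ h₂, one_smul]
    _ = (r * r) • ⟪N, N⟫ • p := by
      simp only [gauss, real_inner_smul_left, real_inner_smul_right, smul_smul, r, N]
      ring_nf
    _ = ⟪p, gauss Φ lam x⟫ • gauss Φ lam x := by
      rw [inner_cross3_smul_eq hp₁ hp₂]
      simp only [gauss, real_inner_smul_right, smul_smul, r]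
      ring_nf

theorem I11_mul_I22_le_sq_I12 {Q₁ Q₂ : ℝ}
    (hH : meanCurv Φ lam x = 4 * exp (-(4 * lam x)) * (Q₁ * I011 Φ lam x - Q₂ * I012 Φ lam x))
    (hell : 4 * exp (-(2 * lam x)) * √(Q₁ ^ 2 + Q₂ ^ 2) < 1) :
    I11 Φ lam x * I22 Φ lam x ≤ I12 Φ lam x ^ 2 := by
  refine mul_le_sq_of_add_eq (exp_pos _).le hell (mul_left_cancel₀ (exp_pos (-(2 * lam x))).ne' ?_)
  have h4 : exp (-(4 * lam x)) = exp (-(2 * lam x)) ^ 2 := by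
    rw [← exp_nat_mul]
    ring_nf
  rw [meanCurv, I011, I012, h4] at hH
  linear_combination 2 * hH

theorem sq_I12_lt_I11_mul_I22_of_isLocalMax (hΦ : ContDiff ℝ 2 Φ)
    (hmax : IsLocalMax (‖Φ ·‖ ^ 2) x) (horth : ⟪d1 Φ x, d2 Φ x⟫ = 0)
    (h₁ : ‖d1 Φ x‖ = exp (lam x)) (h₂ : ‖d2 Φ x‖ = exp (lam x)) :
    I12 Φ lam x ^ 2 < I11 Φ lam x * I22 Φ lam x := by
  set κ := ⟪Φ x, gauss Φ lam x⟫
  have hd : DifferentiableAt ℝ Φ x := hΦ.differentiable (by norm_num) x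
  have hp : Φ x = κ • gauss Φ lam x := eq_inner_gauss_smul_gauss horth h₁ h₂
    (hmax.inner_fderiv_eq_zero hd (1, 0)) (hmax.inner_fderiv_eq_zero hd (0, 1))
  have hquad (s t : ℝ) : κ * I11 Φ lam x * s ^ 2 + 2 * (κ * I12 Φ lam x) * s * t
      + κ * I22 Φ lam x * t ^ 2 ≤ -(exp (lam x) ^ 2 * (s ^ 2 + t ^ 2)) := by
    have := hmax.norm_fderiv_sq_add_inner_fderiv_fderiv_nonpos hΦ (s, t)
    rw [fderiv_apply_prod, fderiv_fderiv_apply_prod hΦ.contDiffAt, hp, norm_add_sq_real,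
      norm_smul, norm_smul, real_inner_smul_left, real_inner_smul_right, horth, h₁, h₂] at this
    simp only [inner_add_right, real_inner_smul_left, real_inner_smul_right, I11, I12, I22,
      Real.norm_eq_abs, mul_pow, sq_abs] at this ⊢
    linarith
  have hdet := sq_lt_mul_of_quadratic_le_neg (by positivity) hquad
  refine lt_of_mul_lt_mul_left (a := κ ^ 2) ?_ (sq_nonneg κ)
  linarith

end Conformal

/-- There is no compact strictly elliptic conformally constrained
minimal torus in `ℝ³`: no smooth doubly periodic conformal immersion `Φ : ℝ² → ℝ³`
can satisfy `H = 4 e^{-4λ}(Q₁ I⁰₁₁ - Q₂ I⁰₁₂)` together with the strict ellipticity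
condition `4 e^{-2λ} √(Q₁² + Q₂²) < 1` everywhere. -/
theorem no_compact_strictly_elliptic_constrained_minimal_in_R3 :
    ¬ ∃ (v₁ v₂ : RR2) (Φ : RR2 → RR3) (lam : RR2 → ℝ) (Q₁ Q₂ : ℝ),
      LinearIndependent ℝ ![v₁, v₂] ∧
      ContDiff ℝ (⊤ : ℕ∞) Φ ∧ ContDiff ℝ (⊤ : ℕ∞) lam ∧
      (∀ (x : RR2) (m k : ℤ), Φ (x + m • v₁ + k • v₂) = Φ x) ∧
      (∀ x : RR2, ⟪d1 Φ x, d2 Φ x⟫ = 0) ∧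
      (∀ x : RR2, ‖d1 Φ x‖ = exp (lam x)) ∧
      (∀ x : RR2, ‖d2 Φ x‖ = exp (lam x)) ∧
      (∀ x : RR2, meanCurv Φ lam x
        = 4 * exp (-(4 * lam x)) * (Q₁ * I011 Φ lam x - Q₂ * I012 Φ lam x)) ∧
      (∀ x : RR2, 4 * exp (-(2 * lam x)) * Real.sqrt (Q₁ ^ 2 + Q₂ ^ 2) < 1) := by
  rintro ⟨v₁, v₂, Φ, lam, Q₁, Q₂, hv, hΦ, -, hper, horth, h₁, h₂, hH, hell⟩
  obtain ⟨x₀, hx₀⟩ := Continuous.exists_forall_le_of_periodic₂ (f := (‖Φ ·‖ ^ 2)) (by simp) hv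
    (by fun_prop) fun x m k => by rw [hper]
  have hpos := sq_I12_lt_I11_mul_I22_of_isLocalMax (hΦ.of_le (WithTop.coe_le_coe.2 le_top))
    (.of_forall hx₀) (horth x₀) (h₁ x₀) (h₂ x₀)
  linarith [I11_mul_I22_le_sq_I12 (hH x₀) (hell x₀)]
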